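/- Let A, B be IP-modules and let f¹: A → B and f²: A → B be IP-morphisms of degrees D₁, D₂ and levels L₁, L₂ respectively. If for every integer d the map (f¹_{∞,d}, f²_{∞,d}): F_∞ A_d → F_∞ B_{d+D₁} ⊕ F_∞ B_{d+D₂} is injective, then ℓ(B) ≤ ℓ(A) + max(L₁ - D₁/8, L₂ - D₂/8). -/

import Mathlib

/-- An IP-module over a ring `R`: filtered pieces `F r d` for `r ∈ ℝ ∪ {∞}` and `d ∈ ℤ`,
with connecting maps, periodicity isomorphisms, and boundedness axioms. -/
structure IPMod (R : Type*) [Ring R] where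
  F : WithTop ℝ → ℤ → Type*
  [acg : ∀ r d, AddCommGroup (F r d)]
  [mod : ∀ r d, Module R (F r d)]
  phi : ∀ (r : WithTop ℝ) (d : ℤ), F r d →ₗ[R] F (r + 1) (d + 8)
  phi_bij : ∀ r d, Function.Bijective (phi r d)
  conn : ∀ (r r' : WithTop ℝ), r ≤ r' → ∀ d : ℤ, F r d →ₗ[R] F r' d
  conn_refl : ∀ r d, conn r r le_rfl d = LinearMap.id
  conn_comp : ∀ r r' r'' (h : r ≤ r') (h' : r' ≤ r'') d,
    (conn r' r'' h' d) ∘ₗ (conn r r' h d) = conn r r'' (h.trans h') d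
  phi_conn : ∀ r r' (h : r ≤ r') (h' : r + 1 ≤ r' + 1) d,
    (phi r' d) ∘ₗ (conn r r' h d) = (conn (r + 1) (r' + 1) h' (d + 8)) ∘ₗ (phi r d)
  small : ∀ d, ∃ r₀ : ℝ, ∀ r : ℝ, r ≤ r₀ → ∀ x : F (r : WithTop ℝ) d, x = 0
  large : ∀ d, ∃ r₁ : ℝ, ∀ r : ℝ, r₁ ≤ r →
    Function.Bijective (conn (r : WithTop ℝ) ⊤ le_top d)

attribute [instance] IPMod.acg IPMod.mod

/-- `κ_A(d) = inf { r ∈ ℝ : i_r^∞ : F_r A_d → F_∞ A_d is nonzero }`, valued in `[-∞,∞]`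
with `inf ∅ = ∞`. -/
noncomputable def kappa {R : Type*} [Ring R] (A : IPMod R) (d : ℤ) : EReal :=
  sInf {x : EReal | ∃ r : ℝ, x = (r : EReal) ∧ A.conn (r : WithTop ℝ) ⊤ le_top d ≠ 0}


/-- An IP-morphism `f : A → B` of degree `D` and level `L`: maps
`f_{r,d} : F_r A_d → F_{r+L} B_{d+D}` commuting with the connecting maps and the
periodicity isomorphisms. -/
structure IPHom {R : Type*} [Ring R] (A B : IPMod R) (D : ℤ) (L : ℝ) where
  f : ∀ (r : WithTop ℝ) (d : ℤ), A.F r d →ₗ[R] B.F (r + (L : WithTop ℝ)) (d + D)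
  comm_conn : ∀ (r r' : WithTop ℝ) (h : r ≤ r')
      (h' : r + (L : WithTop ℝ) ≤ r' + (L : WithTop ℝ)) (d : ℤ),
    (f r' d) ∘ₗ (A.conn r r' h d) =
      (B.conn (r + (L : WithTop ℝ)) (r' + (L : WithTop ℝ)) h' (d + D)) ∘ₗ (f r d)
  comm_phi : ∀ (r : WithTop ℝ) (d : ℤ) (x : A.F r d),
    HEq (f (r + 1) (d + 8) (A.phi r d x)) (B.phi (r + (L : WithTop ℝ)) (d + D) (f r d x))

/-- `ℓ(A) = inf { κ_A(d) - d/8 : d ∈ ℤ }`, valued in `[-∞,∞]`. -/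
noncomputable def ell {R : Type*} [Ring R] (A : IPMod R) : EReal :=
  sInf {x : EReal | ∃ d : ℤ, x = kappa A d - (((d : ℝ) / 8 : ℝ) : EReal)}

/-- Transport nonvanishing of a connecting map along equalities of indices. -/
lemma conn_ne_zero_congr {R : Type*} [Ring R] (B : IPMod R) {s s' t t' : WithTop ℝ}
    (hs : s = s') (ht : t = t') {h : s ≤ t} {h' : s' ≤ t'} (d : ℤ)
    (hne : B.conn s t h d ≠ 0) : B.conn s' t' h' d ≠ 0 := by
  subst hs; subst ht; exact hne

lemma EReal.le_add_coe_iff {x y : EReal} (c : ℝ) : x ≤ y + (c : EReal) ↔ x - (c : EReal) ≤ y :=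
  (EReal.sub_le_iff_le_add (Or.inl (EReal.coe_ne_bot c)) (Or.inl (EReal.coe_ne_top c))).symm

lemma EReal.sub_add_coe (x : EReal) (a b : ℝ) :
    (x - (a : EReal)) + (b : EReal) = x + ((b - a : ℝ) : EReal) := by
  induction x using EReal.rec with
  | bot => simp [sub_eq_add_neg, EReal.bot_add]
  | top =>
      rw [sub_eq_add_neg, ← EReal.coe_neg, EReal.top_add_coe, EReal.top_add_coe,
        EReal.top_add_coe]
  | coe x =>
      rw [← EReal.coe_sub, ← EReal.coe_add, ← EReal.coe_add, EReal.coe_eq_coe_iff]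
      ring

/-- Key auxiliary step: a single IP-morphism whose value at `∞` does not kill the
image of `x` bounds `ℓ(B)`. -/
lemma ell_le_of_single {R : Type*} [Ring R] (A B : IPMod R) (D : ℤ) (L : ℝ)
    (g : IPHom A B D L) (d : ℤ) (r : ℝ) (x : A.F (r : WithTop ℝ) d)
    (h : g.f ⊤ d (A.conn (r : WithTop ℝ) ⊤ le_top d x) ≠ 0) :
    ell B ≤ ((r + L - ((d : ℝ) + (D : ℝ)) / 8 : ℝ) : EReal) := by
  have h' : (r : WithTop ℝ) + (L : WithTop ℝ) ≤ ⊤ + (L : WithTop ℝ) :=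
    add_le_add_left le_top _
  have comm := g.comm_conn (r : WithTop ℝ) ⊤ le_top h' d
  have hBconn : B.conn ((r : WithTop ℝ) + (L : WithTop ℝ)) (⊤ + (L : WithTop ℝ)) h' (d + D) ≠ 0 := by
    intro h0
    apply h
    have hx := LinearMap.congr_fun comm x
    simp only [LinearMap.comp_apply] at hx
    rw [hx, h0, LinearMap.zero_apply]
  have hBconn' : B.conn (((r + L : ℝ) : WithTop ℝ)) ⊤ le_top (d + D) ≠ 0 :=
    conn_ne_zero_congr B (WithTop.coe_add r L).symm (top_add _) (d + D) hBconn
  have hk : kappa B (d + D) ≤ ((r + L : ℝ) : EReal) :=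
    sInf_le ⟨r + L, rfl, hBconn'⟩
  have hl : ell B ≤ kappa B (d + D) - ((((d + D : ℤ) : ℝ) / 8 : ℝ) : EReal) :=
    sInf_le ⟨d + D, rfl⟩
  refine hl.trans ?_
  have : kappa B (d + D) - ((((d + D : ℤ) : ℝ) / 8 : ℝ) : EReal)
      ≤ ((r + L : ℝ) : EReal) - ((((d + D : ℤ) : ℝ) / 8 : ℝ) : EReal) :=
    EReal.sub_le_sub hk le_rfl
  refine this.trans ?_
  rw [← EReal.coe_sub, EReal.coe_le_coe_iff]
  push_cast
  linarith

/-- If `(f¹_{∞,d}, f²_{∞,d})` is injective for all `d`, then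
`ℓ(B) ≤ ℓ(A) + max (L₁ - D₁/8) (L₂ - D₂/8)`. -/
theorem ell_le_of_pair_injective {R : Type*} [Ring R] (A B : IPMod R)
    (D₁ D₂ : ℤ) (L₁ L₂ : ℝ) (f₁ : IPHom A B D₁ L₁) (f₂ : IPHom A B D₂ L₂)
    (hinj : ∀ d : ℤ, Function.Injective (fun x : A.F ⊤ d => (f₁.f ⊤ d x, f₂.f ⊤ d x))) :
    ell B ≤ ell A + ((max (L₁ - (D₁ : ℝ) / 8) (L₂ - (D₂ : ℝ) / 8) : ℝ) : EReal) := by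
  set M : ℝ := max (L₁ - (D₁ : ℝ) / 8) (L₂ - (D₂ : ℝ) / 8) with hM
  -- Key pointwise estimate.
  have key : ∀ (d : ℤ) (r : ℝ), A.conn (r : WithTop ℝ) ⊤ le_top d ≠ 0 →
      ell B ≤ ((r - (d : ℝ) / 8 + M : ℝ) : EReal) := by
    intro d r hA
    obtain ⟨x, hx⟩ : ∃ x, A.conn (r : WithTop ℝ) ⊤ le_top d x ≠ 0 := by
      by_contra hc
      push_neg at hc
      exact hA (LinearMap.ext fun x => by simpa using hc x)
    set y := A.conn (r : WithTop ℝ) ⊤ le_top d x with hy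
    have hcases : f₁.f ⊤ d y ≠ 0 ∨ f₂.f ⊤ d y ≠ 0 := by
      by_contra hc
      push_neg at hc
      apply hx
      apply hinj d
      simp only [← hy, hc.1, hc.2, map_zero]
    rcases hcases with hcase | hcase
    · have h1 := ell_le_of_single A B D₁ L₁ f₁ d r x hcase
      refine h1.trans ?_
      rw [EReal.coe_le_coe_iff]
      have := le_max_left (L₁ - (D₁ : ℝ) / 8) (L₂ - (D₂ : ℝ) / 8)
      rw [← hM] at this
      linarith
    · have h2 := ell_le_of_single A B D₂ L₂ f₂ d r x hcase
      refine h2.trans ?_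
      rw [EReal.coe_le_coe_iff]
      have := le_max_right (L₁ - (D₁ : ℝ) / 8) (L₂ - (D₂ : ℝ) / 8)
      rw [← hM] at this
      linarith
  -- From the key estimate, bound against each `κ_A(d) - d/8 + M`.
  have step : ∀ d : ℤ, ell B ≤ (kappa A d - (((d : ℝ) / 8 : ℝ) : EReal)) + (M : EReal) := by
    intro d
    rw [EReal.sub_add_coe]
    rw [EReal.le_add_coe_iff]
    refine le_sInf ?_
    rintro z ⟨r, rfl, hr⟩
    rw [← EReal.le_add_coe_iff, ← EReal.coe_add]
    have := key d r hr
    refine this.trans ?_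
    rw [EReal.coe_le_coe_iff]
    linarith
  have hfin : ell B - (M : EReal) ≤ ell A := by
    refine le_sInf ?_
    rintro z ⟨d, rfl⟩
    rw [← EReal.le_add_coe_iff]
    exact step d
  rw [← EReal.le_add_coe_iff] at hfin
  exact hfin
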